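/- Let q be a prime power, let μ = [μ_1 ≥ … ≥ μ_r] be a partition of n, and let 0 ≤ k ≤ n. Then Σ_{ν} V(μ,ν) = Σ_{ν} V(μ′,ν) + Σ_{ν′} ( V(μ′,ν′) − q^{μ_r−1}·V(μ″,ν′) + (q^{μ_r−1} − 1)·V(μ‴,ν′) ), where ν ranges over all weakly decreasing sequences of r nonnegative integers summing to k, ν′ ranges over all weakly decreasing sequences of r nonnegative integers summing to k−1, and any summand whose partition argument is undefined is omitted (treated as 0). -/

import Mathlib

/-!
Only the last two factors of `V(μ,ν)` involve `μ_{r-1}`, `μ_r` and `ν_r`. With `ν = ν′ + e_r`, the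
q-Pascal rule `binom(m,k) = binom(m-1,k) + q^{m-k} binom(m-1,k-1)` and the absorption identity
`(q^{m-k} - 1) binom(m,k) = (q^m - 1) binom(m-1,k)` give, term by term,
`V(μ,ν′+e_r) - V(μ′,ν′+e_r) = V(μ′,ν′) - q^{μ_r-1} V(μ″,ν′) + (q^{μ_r-1} - 1) V(μ‴,ν′)`.
Summing over `ν′` gives the theorem: on the left the `ν` with `ν_r = 0` contribute nothing, since
then `V(μ,ν) = V(μ′,ν)`, and when `ν′ + e_r` is not decreasing both sides of the identity vanish.
-/

open scoped Classical

/-- The q-binomial coefficient `binom(m,k)_q = ∏_{i=1}^{k} (q^{m−k+i} − 1)/(q^i − 1)`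
for `0 ≤ k ≤ m`, and `0` otherwise. -/
noncomputable def qbinom (q : ℚ) (m k : ℤ) : ℚ :=
  if 0 ≤ k ∧ k ≤ m then
    ∏ i ∈ Finset.Icc 1 k.toNat, (q ^ (m - k + (i : ℤ)).toNat - 1) / (q ^ i - 1)
  else 0

/-- `V(μ,ν) = ∏_{j=1}^{r} binom(μ_j − ν_{j+1}, ν_j − ν_{j+1})_q · q^{ν_{j+1}(μ_j − ν_j)}`,
defined to be `0` if some entry `μ_j` or `ν_j` (for `1 ≤ j ≤ r`) is negative. -/
noncomputable def Vq (q : ℚ) (r : ℕ) (μ ν : ℕ → ℤ) : ℚ :=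
  if ∀ j ∈ Finset.Icc 1 r, 0 ≤ μ j ∧ 0 ≤ ν j then
    ∏ j ∈ Finset.Icc 1 r,
      qbinom q (μ j - ν (j + 1)) (ν j - ν (j + 1)) * q ^ (ν (j + 1) * (μ j - ν j))
  else 0

/-- The set of weakly decreasing sequences `ν_1 ≥ … ≥ ν_r ≥ 0` of nonnegative integers
summing to `k` (encoded as functions `ℕ → ℤ` vanishing outside `[1, r]`). -/
def nuSet (r : ℕ) (k : ℤ) : Set (ℕ → ℤ) :=
  {ν | (∀ j : ℕ, ν j ≠ 0 → j ∈ Finset.Icc 1 r)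
    ∧ (∀ j ∈ Finset.Icc 1 r, 0 ≤ ν j)
    ∧ (∀ i j : ℕ, 1 ≤ i → i ≤ j → j ≤ r → ν j ≤ ν i)
    ∧ ∑ j ∈ Finset.Icc 1 r, ν j = k}

open Finset

noncomputable def qfact (q : ℚ) (n : ℕ) : ℚ := ∏ i ∈ Icc 1 n, (q ^ i - 1)

section QBinomial

variable {q : ℚ}

theorem qfact_zero : qfact q 0 = 1 := rfl

theorem qfact_succ (n : ℕ) : qfact q (n + 1) = qfact q n * (q ^ (n + 1) - 1) :=
  prod_Icc_succ_top (by omega) _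

theorem pow_sub_one_ne_zero (hq : 1 < q) {i : ℕ} (hi : i ≠ 0) : q ^ i - 1 ≠ 0 :=
  sub_ne_zero.2 (one_lt_pow₀ hq hi).ne'

theorem qfact_ne_zero (hq : 1 < q) (n : ℕ) : qfact q n ≠ 0 :=
  prod_ne_zero_iff.2 fun i hi => pow_sub_one_ne_zero hq (by rw [mem_Icc] at hi; omega)

theorem qfact_add (d k : ℕ) :
    qfact q (d + k) = qfact q d * ∏ i ∈ Icc 1 k, (q ^ (d + i) - 1) := by
  induction k with
  | zero => simp
  | succ k ih => rw [← add_assoc, qfact_succ, ih, prod_Icc_succ_top (by omega), mul_assoc]; rfl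

theorem qbinom_eq_qfact (hq : 1 < q) {m k : ℤ} {d j : ℕ} (hk : k = j) (hm : m = d + j) :
    qbinom q m k = qfact q (d + j) / (qfact q d * qfact q j) := by
  subst hk hm
  rw [qbinom, if_pos (by omega), qfact_add, Int.toNat_natCast, prod_div_distrib,
    mul_div_mul_left _ _ (qfact_ne_zero hq d)]
  congr 1
  refine prod_congr rfl fun i _ => ?_
  rw [show (d : ℤ) + j - j + i = ((d + i : ℕ) : ℤ) by push_cast; ring, Int.toNat_natCast]

theorem qbinom_eq_zero {m k : ℤ} (h : k < 0 ∨ m < k) : qbinom q m k = 0 :=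
  if_neg (by omega)

theorem qbinom_zero_right {m : ℤ} (hm : 0 ≤ m) : qbinom q m 0 = 1 := by
  simp [qbinom, hm]

theorem qbinom_self (hq : 1 < q) {m : ℤ} (hm : 0 ≤ m) : qbinom q m m = 1 := by
  lift m to ℕ using hm
  rw [qbinom_eq_qfact hq (d := 0) rfl (by simp), zero_add, qfact_zero, one_mul,
    div_self (qfact_ne_zero hq m)]

theorem qbinom_pascal (hq : 1 < q) {m : ℤ} (hm : 1 ≤ m) (k : ℤ) :
    qbinom q m k = qbinom q (m - 1) k + q ^ (m - k) * qbinom q (m - 1) (k - 1) := by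
  rcases lt_or_ge k 0 with hk | hk
  · rw [qbinom_eq_zero (.inl hk), qbinom_eq_zero (.inl hk), qbinom_eq_zero (.inl (by omega))]
    ring
  rcases lt_or_ge m k with hmk | hmk
  · rw [qbinom_eq_zero (.inr hmk), qbinom_eq_zero (.inr (by omega)),
      qbinom_eq_zero (.inr (by omega))]
    ring
  rcases eq_or_lt_of_le hk with rfl | hk
  · rw [qbinom_zero_right (by omega), qbinom_zero_right (by omega),
      qbinom_eq_zero (.inl (by omega))]
    ring
  rcases eq_or_lt_of_le hmk with rfl | hmk
  · rw [qbinom_self hq (by omega), qbinom_self hq (by omega), qbinom_eq_zero (.inr (by omega))]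
    simp
  obtain ⟨K, rfl⟩ : ∃ K : ℕ, k = K + 1 := ⟨(k - 1).toNat, by omega⟩
  obtain ⟨D, rfl⟩ : ∃ D : ℕ, m = D + K + 2 := ⟨(m - K - 2).toNat, by omega⟩
  rw [qbinom_eq_qfact hq (d := D + 1) (j := K + 1) (by push_cast; ring) (by push_cast; ring),
    qbinom_eq_qfact hq (d := D) (j := K + 1) (by push_cast; ring) (by push_cast; ring),
    qbinom_eq_qfact hq (d := D + 1) (j := K) (by ring) (by push_cast; ring),
    show (D : ℤ) + K + 2 - (K + 1) = ((D + 1 : ℕ) : ℤ) by push_cast; ring, zpow_natCast,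
    show D + 1 + (K + 1) = D + K + 1 + 1 by ring, show D + (K + 1) = D + K + 1 by ring,
    show D + 1 + K = D + K + 1 by ring, qfact_succ (D + K + 1), qfact_succ D, qfact_succ K]
  have := qfact_ne_zero hq D
  have := qfact_ne_zero hq K
  have := pow_sub_one_ne_zero hq (q := q) (i := D + 1) (by omega)
  have := pow_sub_one_ne_zero hq (q := q) (i := K + 1) (by omega)
  field_simp
  ring

theorem qbinom_absorb (hq : 1 < q) {m : ℤ} (hm : 0 ≤ m) (k : ℤ) :
    (q ^ (m - k) - 1) * qbinom q m k = (q ^ m - 1) * qbinom q (m - 1) k := by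
  rcases lt_or_ge k 0 with hk | hk
  · rw [qbinom_eq_zero (.inl hk), qbinom_eq_zero (.inl hk), mul_zero, mul_zero]
  rcases lt_or_ge m k with hmk | hmk
  · rw [qbinom_eq_zero (.inr hmk), qbinom_eq_zero (.inr (by omega)), mul_zero, mul_zero]
  rcases eq_or_lt_of_le hmk with rfl | hmk
  · rw [qbinom_eq_zero (m := k - 1) (.inr (by omega)), sub_self, zpow_zero, sub_self, zero_mul,
      mul_zero]
  lift k to ℕ using hk
  obtain ⟨D, rfl⟩ : ∃ D : ℕ, m = D + k + 1 := ⟨(m - k - 1).toNat, by omega⟩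
  rw [qbinom_eq_qfact hq (d := D + 1) (j := k) rfl (by push_cast; ring),
    qbinom_eq_qfact hq (d := D) (j := k) rfl (by ring),
    show (D : ℤ) + k + 1 - k = ((D + 1 : ℕ) : ℤ) by push_cast; ring,
    show (D : ℤ) + k + 1 = ((D + k + 1 : ℕ) : ℤ) by push_cast; ring, zpow_natCast, zpow_natCast,
    show D + 1 + k = D + k + 1 by ring, qfact_succ (D + k), qfact_succ D]
  have := qfact_ne_zero hq D
  have := qfact_ne_zero hq k
  have := pow_sub_one_ne_zero hq (q := q) (i := D + 1) (by omega)
  field_simp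

/-- Here `a`, `b`, `c` stand for the products of the first `r - 1` factors of `V(μ, ν + e_r)`,
`V(μ, ν)` and `V(μ″, ν)`, and `M = μ_r`, `y = ν_r`. -/
theorem qbinom_last_factor_identity (hq : 1 < q) {M y : ℤ} (hM : 1 ≤ M) {a b c : ℚ}
    (h : qbinom q (M - 1) y * (a - b + q ^ y * c) = 0) :
    a * (qbinom q M (y + 1) - qbinom q (M - 1) (y + 1))
      = b * qbinom q (M - 1) y - q ^ (M - 1) * (c * qbinom q (M - 1) y)
        + (q ^ (M - 1) - 1) * (b * qbinom q (M - 2) y) := by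
  have hq0 : q ≠ 0 := by positivity
  have hP := qbinom_pascal hq hM (y + 1)
  have hA := qbinom_absorb hq (m := M - 1) (by omega) y
  have hpow : q ^ (M - 1 - y) * q ^ y = q ^ (M - 1) := by
    rw [← zpow_add₀ hq0, sub_add_cancel]
  rw [show M - (y + 1) = M - 1 - y by ring, add_sub_cancel_right] at hP
  rw [show M - 1 - 1 = M - 2 by ring] at hA
  linear_combination a * hP + b * hA + q ^ (M - 1 - y) * h - c * qbinom q (M - 1) y * hpow

end QBinomial

/-- The factor of `V(μ,ν)` at index `j`, with `a = μ_j`, `x = ν_j`, `y = ν_{j+1}`. -/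
noncomputable def vFactor (q : ℚ) (a x y : ℤ) : ℚ := qbinom q (a - y) (x - y) * q ^ (y * (a - x))

noncomputable def vProd (q : ℚ) (s : ℕ) (μ ν : ℕ → ℤ) : ℚ :=
  ∏ j ∈ Icc 1 s, vFactor q (μ j) (ν j) (ν (j + 1))

section VProduct

variable {q : ℚ}

theorem vFactor_zero_right (a x : ℤ) : vFactor q a x 0 = qbinom q a x := by
  simp [vFactor]

theorem vFactor_succ (hq : 1 < q) {a x y : ℤ} (hya : y < a) :
    vFactor q a x (y + 1) = vFactor q a x y - q ^ y * vFactor q (a - 1) x y := by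
  have hq0 : q ≠ 0 := by positivity
  have hP := qbinom_pascal hq (m := a - y) (by omega) (x - y)
  rw [show a - y - (x - y) = a - x by ring] at hP
  simp only [vFactor]
  rw [show a - (y + 1) = a - y - 1 by ring, show x - (y + 1) = x - y - 1 by ring,
    show a - 1 - y = a - y - 1 by ring, show (y + 1) * (a - x) = y * (a - x) + (a - x) by ring,
    show y * (a - x) = y + y * (a - 1 - x) by ring, zpow_add₀ hq0, zpow_add₀ hq0, hP]
  ring

theorem vProd_zero (μ ν : ℕ → ℤ) : vProd q 0 μ ν = 1 := rfl

theorem vProd_succ (s : ℕ) (μ ν : ℕ → ℤ) :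
    vProd q (s + 1) μ ν = vProd q s μ ν * vFactor q (μ (s + 1)) (ν (s + 1)) (ν (s + 2)) :=
  prod_Icc_succ_top (by omega) _

theorem vProd_update_left {s i : ℕ} (hi : s < i) (μ ν : ℕ → ℤ) (b : ℤ) :
    vProd q s (Function.update μ i b) ν = vProd q s μ ν :=
  prod_congr rfl fun j hj => by
    rw [Function.update_of_ne (by rw [mem_Icc] at hj; omega)]

theorem vProd_update_right {s i : ℕ} (hi : s + 1 < i) (μ ν : ℕ → ℤ) (b : ℤ) :
    vProd q s μ (Function.update ν i b) = vProd q s μ ν :=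
  prod_congr rfl fun j hj => by
    rw [mem_Icc] at hj
    rw [Function.update_of_ne (by omega), Function.update_of_ne (by omega)]

/-- If `μ_r < 0`, both sides vanish: the last factor is `binom(μ_r, ν_r) = 0`. -/
theorem Vq_eq_vProd {r : ℕ} {μ ν : ℕ → ℤ} (hμ : ∀ j ∈ Ico 1 r, 0 ≤ μ j)
    (hν : ∀ j ∈ Icc 1 r, 0 ≤ ν j) (hνr : ν (r + 1) = 0) : Vq q r μ ν = vProd q r μ ν := by
  unfold Vq
  split_ifs with h
  · rfl
  simp only [not_forall, not_and_or, not_le] at h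
  obtain ⟨j, hj, hμj | hνj⟩ := h
  · have hjr : j = r := by
      by_contra hjr
      have := hμ j (by rw [mem_Icc] at hj; rw [mem_Ico]; omega)
      omega
    subst hjr
    refine (prod_eq_zero hj ?_).symm
    have := hν j hj
    rw [vFactor, hνr, sub_zero, sub_zero, qbinom_eq_zero (.inr (by omega)), zero_mul]
  · exact absurd (hν j hj) (not_le.2 hνj)

theorem Vq_eq_zero_of_lt {r j : ℕ} (hj : j ∈ Icc 1 r) (μ : ℕ → ℤ) {ν : ℕ → ℤ}
    (h : ν j < ν (j + 1)) : Vq q r μ ν = 0 := by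
  unfold Vq
  split_ifs
  · exact prod_eq_zero hj (by rw [qbinom_eq_zero (.inl (by omega)), zero_mul])
  · rfl

theorem Vq_succ_eq {s : ℕ} {μ ν : ℕ → ℤ} (hμ : ∀ j ∈ Ico 1 (s + 1), 0 ≤ μ j)
    (hν : ∀ j ∈ Icc 1 (s + 1), 0 ≤ ν j) (hνr : ν (s + 2) = 0) :
    Vq q (s + 1) μ ν = vProd q s μ ν * qbinom q (μ (s + 1)) (ν (s + 1)) := by
  rw [Vq_eq_vProd hμ hν hνr, vProd_succ, hνr, vFactor_zero_right]

theorem nonneg_update_last {s : ℕ} {μ : ℕ → ℤ} (hμ : ∀ j ∈ Ico 1 (s + 1), 0 ≤ μ j) (b : ℤ) :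
    ∀ j ∈ Ico 1 (s + 1), 0 ≤ Function.update μ (s + 1) b j := fun j hj => by
  rw [Function.update_of_ne (by rw [mem_Ico] at hj; omega)]
  exact hμ j hj

theorem Vq_update_last_of_eq_zero {r : ℕ} {μ ν : ℕ → ℤ} (hμ : ∀ j ∈ Ico 1 r, 0 ≤ μ j)
    (hμr : 1 ≤ μ r) (hν : ∀ j ∈ Icc 1 r, 0 ≤ ν j) (hνr : ν r = 0) (hνr' : ν (r + 1) = 0) :
    Vq q r (Function.update μ r (μ r - 1)) ν = Vq q r μ ν := by
  cases r with
  | zero => simp [Vq]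
  | succ s =>
    rw [Vq_succ_eq (nonneg_update_last hμ _) hν hνr', Vq_succ_eq hμ hν hνr',
      vProd_update_left (lt_add_one s), Function.update_self, hνr,
      qbinom_zero_right (by omega), qbinom_zero_right (by omega)]

theorem ite_ite_eq_update_update (μ : ℕ → ℤ) (s : ℕ) :
    (fun j => if j = s + 1 then μ (s + 1) - 1 else if j = s + 1 - 1 then μ (s + 1 - 1) - 1
      else μ j) = Function.update (Function.update μ s (μ s - 1)) (s + 1) (μ (s + 1) - 1) := by
  funext j
  simp only [Function.update_apply, add_tsub_cancel_right]

theorem Vq_update_update_eq {s : ℕ} {μ ν : ℕ → ℤ} (hμ : ∀ j ∈ Ico 1 (s + 1), 1 ≤ μ j)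
    (hν : ∀ j ∈ Icc 1 (s + 1), 0 ≤ ν j) (hνr : ν (s + 2) = 0) (b : ℤ) :
    Vq q (s + 1) (Function.update (Function.update μ s (μ s - 1)) (s + 1) b) ν
      = vProd q s (Function.update μ s (μ s - 1)) ν * qbinom q b (ν (s + 1)) := by
  have hμs : ∀ j ∈ Ico 1 (s + 1), 0 ≤ Function.update μ s (μ s - 1) j := fun j hj => by
    have := hμ j hj
    rw [Function.update_apply]
    split_ifs <;> subst_vars <;> omega
  rw [Vq_succ_eq (nonneg_update_last hμs _) hν hνr, vProd_update_left (lt_add_one s),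
    Function.update_self]

theorem qbinom_mul_vProd_raise_eq_zero (hq : 1 < q) {t : ℕ} {μ : ℕ → ℤ} (ν : ℕ → ℤ)
    (hμ : μ (t + 2) ≤ μ (t + 1)) :
    qbinom q (μ (t + 2) - 1) (ν (t + 2))
      * (vProd q (t + 1) μ (Function.update ν (t + 2) (ν (t + 2) + 1)) - vProd q (t + 1) μ ν
        + q ^ ν (t + 2) * vProd q (t + 1) (Function.update μ (t + 1) (μ (t + 1) - 1)) ν) = 0 := by
  simp only [vProd_succ, vProd_update_left (lt_add_one t),
    vProd_update_right (show t + 1 < t + 2 by omega), Function.update_self,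
    Function.update_of_ne (show t + 1 ≠ t + 2 by omega)]
  rcases lt_or_ge (ν (t + 2)) (μ (t + 1)) with hlt | hge
  · rw [vFactor_succ hq hlt]
    ring
  · rw [qbinom_eq_zero (.inr (by omega)), zero_mul]

theorem Vq_sub_Vq_raise_eq (hq : 1 < q) {r : ℕ} (hr : 1 ≤ r) {μ ν : ℕ → ℤ}
    (hμmono : ∀ i j : ℕ, 1 ≤ i → i ≤ j → j ≤ r → μ j ≤ μ i) (hμr : 1 ≤ μ r)
    (hν : ∀ j ∈ Icc 1 r, 0 ≤ ν j) (hνr : ν (r + 1) = 0) :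
    Vq q r μ (Function.update ν r (ν r + 1))
        - Vq q r (Function.update μ r (μ r - 1)) (Function.update ν r (ν r + 1))
      = Vq q r (Function.update μ r (μ r - 1)) ν
        - q ^ (μ r - 1)
          * (if 2 ≤ r then
              Vq q r (fun j => if j = r then μ r - 1 else if j = r - 1 then μ (r - 1) - 1 else μ j) ν
            else 0)
        + (q ^ (μ r - 1) - 1) * Vq q r (Function.update μ r (μ r - 2)) ν := by
  obtain ⟨s, rfl⟩ : ∃ s, r = s + 1 := ⟨r - 1, by omega⟩
  have hμ : ∀ j ∈ Ico 1 (s + 1), 1 ≤ μ j := fun j hj => by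
    rw [mem_Ico] at hj
    exact hμr.trans (hμmono j (s + 1) hj.1 hj.2.le le_rfl)
  have hμ₀ : ∀ j ∈ Ico 1 (s + 1), 0 ≤ μ j := fun j hj => zero_le_one.trans (hμ j hj)
  have hνr₀ : ∀ j ∈ Icc 1 (s + 1), 0 ≤ Function.update ν (s + 1) (ν (s + 1) + 1) j :=
    fun j hj => by
      have := hν j hj
      rw [Function.update_apply]
      split_ifs <;> subst_vars <;> omega
  have hνr₁ : Function.update ν (s + 1) (ν (s + 1) + 1) (s + 2) = 0 := by
    rw [Function.update_of_ne (by omega), hνr]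
  set c := if 2 ≤ s + 1 then vProd q s (Function.update μ s (μ s - 1)) ν else 0 with hc
  have hμ'' : (if 2 ≤ s + 1 then Vq q (s + 1)
      (fun j => if j = s + 1 then μ (s + 1) - 1 else if j = s + 1 - 1 then μ (s + 1 - 1) - 1
        else μ j) ν else 0) = c * qbinom q (μ (s + 1) - 1) (ν (s + 1)) := by
    rw [ite_ite_eq_update_update, Vq_update_update_eq hμ hν hνr, hc, ite_mul, zero_mul]
  rw [hμ'', Vq_succ_eq hμ₀ hνr₀ hνr₁, Vq_succ_eq (nonneg_update_last hμ₀ _) hνr₀ hνr₁,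
    Vq_succ_eq (nonneg_update_last hμ₀ _) hν hνr, Vq_succ_eq (nonneg_update_last hμ₀ _) hν hνr]
  simp only [vProd_update_left (lt_add_one s), Function.update_self]
  have key := qbinom_last_factor_identity hq hμr (y := ν (s + 1))
    (a := vProd q s μ (Function.update ν (s + 1) (ν (s + 1) + 1))) (b := vProd q s μ ν) (c := c)
  refine (mul_sub _ _ _).symm.trans ((key ?_).trans (by ring))
  rcases s with _ | t
  · simp [hc, vProd_zero]
  · rw [hc, if_pos (by omega)]
    exact qbinom_mul_vProd_raise_eq_zero hq ν (hμmono _ _ (by omega) (by omega) le_rfl)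

end VProduct

section NuSet

theorem nuSet_finite (r : ℕ) (k : ℤ) : (nuSet r k).Finite := by
  refine Set.Finite.of_finite_image (f := fun ν (j : Icc 1 r) => ν j) ?_ ?_
  · refine (Set.Finite.pi (t := fun _ => Set.Icc 0 k) fun _ => Set.finite_Icc 0 k).subset ?_
    rintro _ ⟨ν, ⟨-, hν, -, hsum⟩, rfl⟩
    refine Set.mem_univ_pi.2 fun j => ⟨hν j j.2, ?_⟩
    exact hsum ▸ single_le_sum (fun i hi => hν i hi) j.2
  · intro ν hν ν' hν' h
    funext j
    by_cases hj : j ∈ Icc 1 r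
    · exact congrFun h ⟨j, hj⟩
    · rw [not_imp_comm.1 (hν.1 j) hj, not_imp_comm.1 (hν'.1 j) hj]

theorem apply_succ_eq_zero_of_mem_nuSet {r : ℕ} {k : ℤ} {ν : ℕ → ℤ} (hν : ν ∈ nuSet r k) :
    ν (r + 1) = 0 :=
  not_imp_comm.1 (hν.1 (r + 1)) (by simp)

theorem update_sub_one_mem_nuSet {r : ℕ} {k : ℤ} {ν : ℕ → ℤ} (hν : ν ∈ nuSet r k)
    (h : 1 ≤ ν r) : Function.update ν r (ν r - 1) ∈ nuSet r (k - 1) := by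
  obtain ⟨hsupp, hnonneg, hmono, hsum⟩ := hν
  have hr : r ∈ Icc 1 r := hsupp r (by omega)
  refine ⟨fun j hj => ?_, fun j hj => ?_, fun i j hi hij hj => ?_, ?_⟩
  · rw [Function.update_apply] at hj
    split_ifs at hj with h
    · exact h ▸ hr
    · exact hsupp j hj
  · have := hnonneg j hj
    rw [Function.update_apply]
    split_ifs <;> omega
  · have := hmono i j hi hij hj
    have := hmono i r hi (hij.trans hj) le_rfl
    simp only [Function.update_apply]
    split_ifs <;> omega
  · rw [sum_update_of_mem hr, ← hsum, ← add_sum_erase _ _ hr, sdiff_singleton_eq_erase]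
    ring

theorem update_add_one_mem_nuSet {r : ℕ} {k : ℤ} {ν : ℕ → ℤ} (hν : ν ∈ nuSet r (k - 1))
    (hr : 1 ≤ r) (h : 2 ≤ r → ν r < ν (r - 1)) :
    Function.update ν r (ν r + 1) ∈ nuSet r k := by
  obtain ⟨hsupp, hnonneg, hmono, hsum⟩ := hν
  have hrr : r ∈ Icc 1 r := mem_Icc.2 ⟨hr, le_rfl⟩
  refine ⟨fun j hj => ?_, fun j hj => ?_, fun i j hi hij hj => ?_, ?_⟩
  · rw [Function.update_apply] at hj
    split_ifs at hj with h
    · exact h ▸ hrr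
    · exact hsupp j hj
  · have := hnonneg j hj
    have := hnonneg r hrr
    rw [Function.update_apply]
    split_ifs <;> subst_vars <;> omega
  · have := hmono i j hi hij hj
    simp only [Function.update_apply]
    split_ifs with hjr hir
    · omega
    · have := hmono i (r - 1) hi (by omega) (by omega)
      have := h (by omega)
      omega
    · omega
    · omega
  · rw [sum_update_of_mem hrr, ← add_sum_erase _ _ hrr, sdiff_singleton_eq_erase] at *
    omega

/-- The `ν ∈ nuSet r k` with `ν_r ≥ 1` are exactly the decreasing `ν' + e_r` with
`ν' ∈ nuSet r (k - 1)`. -/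
theorem finsum_mem_nuSet_eq_finsum_raise {M : Type*} [AddCommMonoid M] {r : ℕ} (hr : 1 ≤ r)
    (k : ℤ) {f : (ℕ → ℤ) → M} (h0 : ∀ ν ∈ nuSet r k, ν r = 0 → f ν = 0)
    (hlt : ∀ ν : ℕ → ℤ, 2 ≤ r → ν (r - 1) < ν r → f ν = 0) :
    ∑ᶠ ν ∈ nuSet r k, f ν = ∑ᶠ ν ∈ nuSet r (k - 1), f (Function.update ν r (ν r + 1)) := by
  have hinj : Function.Injective fun ν : ℕ → ℤ => Function.update ν r (ν r + 1) :=
    Function.LeftInverse.injective (g := fun ν => Function.update ν r (ν r - 1)) fun ν => by simp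
  calc ∑ᶠ ν ∈ nuSet r k, f ν
      = ∑ᶠ ν ∈ (fun ν => Function.update ν r (ν r + 1)) '' nuSet r (k - 1), f ν := by
        refine finsum_mem_inter_support_eq' _ _ _ fun ν hf => ⟨fun hν => ?_, ?_⟩
        · have := hν.2.1 r (mem_Icc.2 ⟨hr, le_rfl⟩)
          have := mt (h0 ν hν) hf
          exact ⟨_, update_sub_one_mem_nuSet hν (by omega), by simp⟩
        · rintro ⟨ν', hν', rfl⟩
          refine update_add_one_mem_nuSet hν' hr fun h2 => ?_
          by_contra hle
          refine hf (hlt _ h2 ?_)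
          simp only [Function.update_self, Function.update_of_ne (show r - 1 ≠ r by omega)]
          omega
    _ = _ := finsum_mem_image hinj.injOn

end NuSet

theorem Vq_sum_recursion_general
    (q r k : ℕ) (hq : ∃ p m : ℕ, Nat.Prime p ∧ 0 < m ∧ q = p ^ m) (hr : 1 ≤ r)
    (μ : ℕ → ℤ)
    (hμmono : ∀ i j : ℕ, 1 ≤ i → i ≤ j → j ≤ r → μ j ≤ μ i) (hμr : 1 ≤ μ r) :
    (∑ᶠ ν ∈ nuSet r (k : ℤ), Vq (q : ℚ) r μ ν)
      = (∑ᶠ ν ∈ nuSet r (k : ℤ), Vq (q : ℚ) r (Function.update μ r (μ r - 1)) ν)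
        + ∑ᶠ ν' ∈ nuSet r ((k : ℤ) - 1),
            (Vq (q : ℚ) r (Function.update μ r (μ r - 1)) ν'
              - (q : ℚ) ^ (μ r - 1)
                  * (if 2 ≤ r then
                      Vq (q : ℚ) r
                        (fun j => if j = r then μ r - 1
                          else if j = r - 1 then μ (r - 1) - 1 else μ j) ν'
                    else 0)
              + ((q : ℚ) ^ (μ r - 1) - 1)
                  * Vq (q : ℚ) r (Function.update μ r (μ r - 2)) ν') := by
  have hq1 : (1 : ℚ) < q := by
    obtain ⟨p, m, hp, hm, rfl⟩ := hq
    exact_mod_cast Nat.one_lt_pow hm.ne' hp.one_lt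
  have hμ : ∀ j ∈ Ico 1 r, 0 ≤ μ j := fun j hj => by
    rw [mem_Ico] at hj
    exact (zero_le_one.trans hμr).trans (hμmono j r hj.1 hj.2.le le_rfl)
  rw [← sub_eq_iff_eq_add', ← finsum_mem_sub_distrib _ _ (nuSet_finite r k),
    finsum_mem_nuSet_eq_finsum_raise hr _ (fun ν hν hνr => ?_) (fun ν h2 hlt => ?_)]
  · exact finsum_mem_congr rfl fun ν hν =>
      Vq_sub_Vq_raise_eq hq1 hr hμmono hμr hν.2.1 (apply_succ_eq_zero_of_mem_nuSet hν)
  · rw [Vq_update_last_of_eq_zero hμ hμr hν.2.1 hνr (apply_succ_eq_zero_of_mem_nuSet hν), sub_self]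
  · have hj : r - 1 ∈ Icc 1 r := mem_Icc.2 ⟨by omega, by omega⟩
    replace hlt : ν (r - 1) < ν (r - 1 + 1) := by rwa [Nat.sub_add_cancel hr]
    rw [Vq_eq_zero_of_lt hj _ hlt, Vq_eq_zero_of_lt hj _ hlt, sub_self]

/-- summing the recursion over all filtration types:
`Σ_ν V(μ,ν) = Σ_ν V(μ′,ν) + Σ_{ν′} (V(μ′,ν′) − q^{μ_r−1} V(μ″,ν′) + (q^{μ_r−1}−1) V(μ‴,ν′))`,
where `ν` runs over weakly decreasing sequences of `r` nonnegative integers summing to `k`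
and `ν′` over those summing to `k − 1`; undefined summands are treated as `0`. -/
theorem Vq_sum_recursion
    (q r n k : ℕ) (hq : ∃ p m : ℕ, Nat.Prime p ∧ 0 < m ∧ q = p ^ m) (hr : 1 ≤ r)
    (hk : k ≤ n)
    (μ : ℕ → ℤ)
    (hμmono : ∀ i j : ℕ, 1 ≤ i → i ≤ j → j ≤ r → μ j ≤ μ i) (hμr : 1 ≤ μ r)
    (hμsum : ∑ j ∈ Finset.Icc 1 r, μ j = n) :
    (∑ᶠ ν ∈ nuSet r (k : ℤ), Vq (q : ℚ) r μ ν)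
      = (∑ᶠ ν ∈ nuSet r (k : ℤ), Vq (q : ℚ) r (Function.update μ r (μ r - 1)) ν)
        + ∑ᶠ ν' ∈ nuSet r ((k : ℤ) - 1),
            (Vq (q : ℚ) r (Function.update μ r (μ r - 1)) ν'
              - (q : ℚ) ^ (μ r - 1)
                  * (if 2 ≤ r then
                      Vq (q : ℚ) r
                        (fun j => if j = r then μ r - 1
                          else if j = r - 1 then μ (r - 1) - 1 else μ j) ν'
                    else 0)
              + ((q : ℚ) ^ (μ r - 1) - 1)
                  * Vq (q : ℚ) r (Function.update μ r (μ r - 2)) ν') :=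
  Vq_sum_recursion_general q r k hq hr μ hμmono hμr
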